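/- Assume K = k_i + k_j ≠ 4 and that it is not the case that both K = 2 and k_l = 0. Then every z ∈ V with E(z) ∈ B and F(z) ∈ B lies in B. In other words, the 𝔰-invariant part of H¹(ℂℙ¹, T₂^{ij}) is zero. -/

import Mathlib

/-!
Everything is computed on coefficients. For `K ≤ 2` the space `B` is all of `V` (for `K = 2`
because `kl ≠ 0`). For `K ≥ 3` a cochain `(a, b)` lies in `B` exactly when `a_n = 0` for
`2 - K < n < 0`, `b_m = 0` for `1 - K < m < 0` and `b_{1-K} = kl · a_{2-K}`. Now `e` and `f`
shift coefficients down and up by one with integer weights (`a_n ↦ n · a_n` and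
`a_n ↦ (2 - K - n) · a_n`), and each of these coefficients is detected by `e` or by `f`; only for
`K = 4` does `a_{-1}` escape both.
-/

noncomputable section

open LaurentPolynomial

/-- `L = ℂ[x, x⁻¹]`, the Laurent polynomials over `ℂ`. -/
abbrev L : Type := LaurentPolynomial ℂ

/-- The coefficient of `x^n` in a Laurent polynomial. -/
def coeffL (p : L) (n : ℤ) : ℂ := (AddMonoidAlgebra.coeff p : ℤ →₀ ℂ) n

lemma coeffL_zero (n : ℤ) : coeffL 0 n = 0 := rfl

lemma coeffL_add (a b : L) (n : ℤ) : coeffL (a + b) n = coeffL a n + coeffL b n := by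
  unfold coeffL; erw [Finsupp.add_apply]; rfl

lemma coeffL_smul (c : ℂ) (a : L) (n : ℤ) : coeffL (c • a) n = c * coeffL a n := by
  unfold coeffL; erw [Finsupp.smul_apply]; rfl

/-- `L₊`: Laurent polynomials involving only nonnegative powers of `x`. -/
def Lplus : Submodule ℂ L where
  carrier := {p | ∀ n : ℤ, n < 0 → coeffL p n = 0}
  zero_mem' := fun n _ => coeffL_zero n
  add_mem' := by intro a b ha hb n hn; rw [coeffL_add, ha n hn, hb n hn, add_zero]
  smul_mem' := by intro c p hp n hn; rw [coeffL_smul, hp n hn, mul_zero]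

/-- `L₋`: Laurent polynomials involving only nonpositive powers of `x`. -/
def Lminus : Submodule ℂ L where
  carrier := {p | ∀ n : ℤ, 0 < n → coeffL p n = 0}
  zero_mem' := fun n _ => coeffL_zero n
  add_mem' := by intro a b ha hb n hn; rw [coeffL_add, ha n hn, hb n hn, add_zero]
  smul_mem' := by intro c p hp n hn; rw [coeffL_smul, hp n hn, mul_zero]

/-- The derivative `d/dx` on Laurent polynomials. -/
def D (p : L) : L := Finsupp.sum (AddMonoidAlgebra.coeff p : ℤ →₀ ℂ) fun n a => ((n : ℂ) * a) • T (n - 1)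

/-- `V = L × L`, the model of Čech 1-cochains with values in `T₂^{ij}`:
a pair `(a, b)` encodes `a(x)ξᵢξⱼ∂/∂x + b(x)ξᵢξⱼξₗ∂/∂ξₗ` on `U₀ ∩ U₁`. -/
abbrev V : Type := L × L

/-- `B₀ = L₊ × L₊`: cochains holomorphic in `U₀`. -/
def B0 : Submodule ℂ V := Lplus.prod Lplus

/-- `B₁`: cochains holomorphic in `U₁`, i.e. pairs `(a, b)` with
`x^(K-2)·a ∈ L₋` and `x^K·(b - kl·x⁻¹·a) ∈ L₋`. -/
def B1 (K kl : ℤ) : Submodule ℂ V :=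
  Lminus.comap ((LinearMap.mulLeft ℂ (T (K - 2))).comp (LinearMap.fst ℂ L L)) ⊓
  Lminus.comap ((LinearMap.mulLeft ℂ (T K)).comp
    (LinearMap.snd ℂ L L - (kl : ℂ) • (LinearMap.mulLeft ℂ (T (-1))).comp (LinearMap.fst ℂ L L)))

/-- The coboundary subspace `B = B₀ + B₁`. -/
def B (K kl : ℤ) : Submodule ℂ V := B0 ⊔ B1 K kl

/-- Action of `e = ∂/∂x` on cocycles: `E(a, b) = (a′, b′)`. -/
def Eop : V → V := fun p => (D p.1, D p.2)

/-- Action of `f = ∂/∂y` on cocycles: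
`F(a, b) = ((2−K)·x·a − x²·a′, kl·a − K·x·b − x²·b′)`. -/
def Fop (K kl : ℤ) : V → V := fun p =>
  (((2 - K : ℤ) : ℂ) • (T 1 * p.1) - T 2 * D p.1,
   (kl : ℂ) • p.1 - (K : ℂ) • (T 1 * p.2) - T 2 * D p.2)

lemma coeffL_sub (a b : L) (n : ℤ) : coeffL (a - b) n = coeffL a n - coeffL b n := by
  unfold coeffL; erw [Finsupp.sub_apply]; rfl

lemma coeffL_T (k n : ℤ) : coeffL (T k) n = if k = n then 1 else 0 := T_apply n k

lemma coeffL_T_mul (k : ℤ) (p : L) (n : ℤ) : coeffL (T k * p) n = coeffL p (n - k) := by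
  unfold coeffL
  erw [AddMonoidAlgebra.coeff_single_mul_apply p (1 : ℂ) k n, one_mul, neg_add_eq_sub]

lemma coeffL_D (p : L) {m n : ℤ} (h : m + 1 = n) : coeffL (D p) m = n * coeffL p n := by
  unfold coeffL D
  rw [Finsupp.sum]
  erw [AddMonoidAlgebra.coeff_sum, Finsupp.finsetSum_apply]
  have hterm : ∀ k ∈ (AddMonoidAlgebra.coeff p).support,
      AddMonoidAlgebra.coeff (((k : ℂ) * AddMonoidAlgebra.coeff p k) • T (k - 1) : L) m
        = if k = n then (k : ℂ) * AddMonoidAlgebra.coeff p k else 0 := by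
    intro k _
    rw [AddMonoidAlgebra.coeff_smul_apply, T_apply]
    by_cases hk : k = n
    · simp [hk, ← h]
    · simp [show k - 1 ≠ m by omega, hk]
  rw [Finset.sum_congr rfl hterm, Finset.sum_ite_eq']
  split_ifs with hn
  · rfl
  · rw [Finsupp.notMem_support_iff.mp hn, mul_zero]

lemma eq_zero_of_intCast_mul_eq_zero {R : Type*} [Ring R] [NoZeroDivisors R] [CharZero R]
    {k : ℤ} {c : R} (hk : k ≠ 0) (h : (k : R) * c = 0) : c = 0 :=
  (mul_eq_zero_iff_left (Int.cast_ne_zero.mpr hk)).mp h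

lemma mem_Lminus_iff {p : L} : p ∈ Lminus ↔ ∀ n : ℤ, 0 < n → coeffL p n = 0 := Iff.rfl

lemma T_mem_Lplus {k : ℤ} (hk : 0 ≤ k) : (T k : L) ∈ Lplus := by
  intro n hn
  rw [coeffL_T, if_neg (by omega)]

def principalPart (p : L) : L :=
  AddMonoidAlgebra.ofCoeff (Finsupp.filter (· < 0) (AddMonoidAlgebra.coeff p))

lemma coeffL_principalPart (p : L) (n : ℤ) :
    coeffL (principalPart p) n = if n < 0 then coeffL p n else 0 := by
  classical
  unfold coeffL principalPart
  erw [Finsupp.filter_apply]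

lemma sub_principalPart_mem_Lplus (p : L) : p - principalPart p ∈ Lplus := by
  intro n hn
  rw [coeffL_sub, coeffL_principalPart, if_pos hn, sub_self]

lemma mem_B0_iff {z : V} : z ∈ B0 ↔ (∀ n : ℤ, n < 0 → coeffL z.1 n = 0) ∧
    (∀ n : ℤ, n < 0 → coeffL z.2 n = 0) :=
  Submodule.mem_prod

lemma mem_B1_iff {K kl : ℤ} {z : V} :
    z ∈ B1 K kl ↔ (∀ n : ℤ, 2 - K < n → coeffL z.1 n = 0) ∧
      (∀ m : ℤ, -K < m → coeffL z.2 m = kl * coeffL z.1 (m + 1)) := by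
  simp only [B1, Submodule.mem_inf, Submodule.mem_comap, LinearMap.comp_apply,
    LinearMap.fst_apply, LinearMap.snd_apply, LinearMap.sub_apply, LinearMap.smul_apply,
    LinearMap.mulLeft_apply, mem_Lminus_iff, coeffL_T_mul, coeffL_sub, coeffL_smul, sub_eq_zero]
  constructor
  · rintro ⟨ha, hb⟩
    refine ⟨fun n hn => ?_, fun m hm => ?_⟩
    · simpa using ha (n + (K - 2)) (by omega)
    · simpa [sub_neg_eq_add] using hb (m + K) (by omega)
  · rintro ⟨ha, hb⟩
    refine ⟨fun n hn => ha _ (by omega), fun m hm => ?_⟩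
    rw [hb _ (by omega), sub_neg_eq_add]

lemma mem_B_of_sub_mem_B0 {K kl : ℤ} {z w : V} (hw : w ∈ B1 K kl) (h : z - w ∈ B0) :
    z ∈ B K kl :=
  Submodule.mem_sup.mpr ⟨z - w, h, w, hw, sub_add_cancel z w⟩

/-- When `K = 2` the coefficient of `x⁻¹` in `b` is absorbed through `kl · a₀`, which needs
`kl ≠ 0`. -/
lemma B_eq_top_of_le_two {K kl : ℤ} (hK : K ≤ 2) (hkl : ¬(K = 2 ∧ kl = 0)) : B K kl = ⊤ := by
  refine eq_top_iff.mpr fun z _ => ?_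
  set c : ℂ := coeffL z.2 (-1) / kl
  refine mem_B_of_sub_mem_B0 (w := (principalPart z.1 + c • T 0, principalPart z.2)) ?_ ?_
  · refine mem_B1_iff.mpr ⟨fun n hn => ?_, fun m hm => ?_⟩
    · simp only [coeffL_add, coeffL_smul, coeffL_principalPart, coeffL_T]
      rw [if_neg (by omega), if_neg (by omega), mul_zero, add_zero]
    · simp only [coeffL_add, coeffL_smul, coeffL_principalPart, coeffL_T]
      by_cases hm0 : 0 ≤ m
      · rw [if_neg (by omega), if_neg (by omega), if_neg (by omega)]
        ring
      · obtain ⟨rfl, rfl⟩ : K = 2 ∧ m = -1 := by omega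
        have hkl0 : (kl : ℂ) ≠ 0 := Int.cast_ne_zero.mpr fun h0 => hkl ⟨rfl, h0⟩
        rw [if_pos (by omega), if_neg (by omega), if_pos (by omega), zero_add, mul_one,
          mul_div_cancel₀ _ hkl0]
  · refine Submodule.mem_prod.mpr ⟨?_, sub_principalPart_mem_Lplus z.2⟩
    rw [Prod.fst_sub, sub_add_eq_sub_sub]
    exact Lplus.sub_mem (sub_principalPart_mem_Lplus z.1) (Lplus.smul_mem c (T_mem_Lplus le_rfl))

lemma mem_B_iff {K kl : ℤ} (hK : 3 ≤ K) {z : V} :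
    z ∈ B K kl ↔ (∀ n : ℤ, 2 - K < n → n < 0 → coeffL z.1 n = 0) ∧
      (∀ m : ℤ, 1 - K < m → m < 0 → coeffL z.2 m = 0) ∧
      coeffL z.2 (1 - K) = kl * coeffL z.1 (2 - K) := by
  constructor
  · intro hz
    obtain ⟨z0, h0, z1, h1, rfl⟩ := Submodule.mem_sup.mp hz
    obtain ⟨h0a, h0b⟩ := mem_B0_iff.mp h0
    obtain ⟨h1a, h1b⟩ := mem_B1_iff.mp h1
    simp only [Prod.fst_add, Prod.snd_add, coeffL_add]
    refine ⟨fun n hn hn' => ?_, fun m hm hm' => ?_, ?_⟩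
    · rw [h0a n hn', h1a n hn, add_zero]
    · rw [h0b m hm', h1b m (by omega), h1a (m + 1) (by omega), mul_zero, add_zero]
    · rw [h0a _ (by omega), h0b _ (by omega), h1b _ (by omega), show 1 - K + 1 = 2 - K by ring,
        zero_add, zero_add]
  · rintro ⟨ha, hb, hab⟩
    have hw1 : ∀ n : ℤ, 2 - K < n → coeffL (principalPart z.1) n = 0 := by
      intro n hn
      rw [coeffL_principalPart]
      split_ifs with hn'
      exacts [ha n hn hn', rfl]
    refine mem_B_of_sub_mem_B0 (w := (principalPart z.1, principalPart z.2))
      (mem_B1_iff.mpr ⟨hw1, fun m hm => ?_⟩)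
      (Submodule.mem_prod.mpr ⟨sub_principalPart_mem_Lplus _, sub_principalPart_mem_Lplus _⟩)
    rcases lt_trichotomy m (1 - K) with hm' | rfl | hm'
    · omega
    · rw [coeffL_principalPart, coeffL_principalPart, if_pos (by omega), if_pos (by omega),
        hab, show 1 - K + 1 = 2 - K by ring]
    · dsimp only
      rw [hw1 _ (by omega), mul_zero, coeffL_principalPart]
      split_ifs with hm0
      exacts [hb m hm' hm0, rfl]

lemma coeffL_Fop_fst (K kl : ℤ) (z : V) {m n : ℤ} (h : m = n + 1) :
    coeffL (Fop K kl z).1 m = ((2 - K - n : ℤ) : ℂ) * coeffL z.1 n := by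
  show coeffL (((2 - K : ℤ) : ℂ) • (T 1 * z.1) - T 2 * D z.1) m = _
  rw [coeffL_sub, coeffL_smul, coeffL_T_mul, coeffL_T_mul, coeffL_D _ (by omega : m - 2 + 1 = n),
    show m - 1 = n by omega]
  push_cast
  ring

lemma coeffL_Fop_snd (K kl : ℤ) (z : V) {m n : ℤ} (h : m = n + 1) :
    coeffL (Fop K kl z).2 m = kl * coeffL z.1 m - ((K + n : ℤ) : ℂ) * coeffL z.2 n := by
  show coeffL ((kl : ℂ) • z.1 - (K : ℂ) • (T 1 * z.2) - T 2 * D z.2) m = _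
  rw [coeffL_sub, coeffL_sub, coeffL_smul, coeffL_smul, coeffL_T_mul, coeffL_T_mul,
    coeffL_D _ (by omega : m - 2 + 1 = n), show m - 1 = n by omega]
  push_cast
  ring

lemma mem_B_of_Eop_mem_of_Fop_mem {K kl : ℤ} (hK3 : 3 ≤ K) (hK4 : K ≠ 4) {z : V}
    (hE : Eop z ∈ B K kl) (hF : Fop K kl z ∈ B K kl) : z ∈ B K kl := by
  obtain ⟨hEa, hEb, hEab⟩ := (mem_B_iff hK3).mp hE
  obtain ⟨hFa, hFb, -⟩ := (mem_B_iff hK3).mp hF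
  dsimp only [Eop] at hEa hEb hEab
  have ha : ∀ n : ℤ, 2 - K < n → n < 0 → coeffL z.1 n = 0 := by
    intro n hn hn'
    -- `e` sees `a_{3-K}` only through the coefficient of `x^(2-K)`, which is free modulo `B`;
    -- `f` sees it through that of `x^(4-K)`, which is constrained unless `K = 4`.
    by_cases hn3 : n = 3 - K
    · have h := hFa (n + 1) (by omega) (by omega)
      rw [coeffL_Fop_fst K kl z rfl] at h
      exact eq_zero_of_intCast_mul_eq_zero (by omega) h
    · have h := hEa (n - 1) (by omega) (by omega)
      rw [coeffL_D _ (sub_add_cancel n 1)] at h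
      exact eq_zero_of_intCast_mul_eq_zero (by omega) h
  have hb : ∀ m : ℤ, 1 - K < m → m < 0 → coeffL z.2 m = 0 := by
    intro m hm hm'
    by_cases hm2 : m = 2 - K
    · rw [coeffL_D _ (by omega : 1 - K + 1 = m), coeffL_D _ (by omega : 2 - K + 1 = 3 - K)] at hEab
      have ha3 : ((3 - K : ℤ) : ℂ) * coeffL z.1 (3 - K) = 0 := by
        rcases hK3.eq_or_lt with h3 | h5
        · simp [← h3]
        · rw [ha _ (by omega) (by omega), mul_zero]
      rw [ha3, mul_zero] at hEab
      exact eq_zero_of_intCast_mul_eq_zero (by omega) hEab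
    · have h := hEb (m - 1) (by omega) (by omega)
      rw [coeffL_D _ (sub_add_cancel m 1)] at h
      exact eq_zero_of_intCast_mul_eq_zero (by omega) h
  refine (mem_B_iff hK3).mpr ⟨ha, hb, ?_⟩
  have h := hFb (2 - K) (by omega) (by omega)
  rw [coeffL_Fop_snd K kl z (by ring : 2 - K = 1 - K + 1), show K + (1 - K) = 1 by ring,
    Int.cast_one, one_mul, sub_eq_zero] at h
  exact h.symm

theorem stmt_6_general (kl K : ℤ) (hK4 : K ≠ 4)
    (h : ¬(K = 2 ∧ kl = 0)) :
    ∀ z : V, Eop z ∈ B K kl → Fop K kl z ∈ B K kl → z ∈ B K kl := by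
  intro z hE hF
  rcases le_or_gt K 2 with hK2 | hK3
  · rw [B_eq_top_of_le_two hK2 h]
    exact Submodule.mem_top
  · exact mem_B_of_Eop_mem_of_Fop_mem hK3 hK4 hE hF

/-- If `K = kᵢ + kⱼ ≠ 4` and not both `K = 2` and `kl = 0`, then the
𝔰-invariant part of `H¹(ℂℙ¹, T₂^{ij})` is zero. -/
theorem stmt_6 (ki kj kl K : ℤ) (hK : K = ki + kj) (hK4 : K ≠ 4)
    (h : ¬(K = 2 ∧ kl = 0)) :
    ∀ z : V, Eop z ∈ B K kl → Fop K kl z ∈ B K kl → z ∈ B K kl :=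
  stmt_6_general kl K hK4 h
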